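/- Let q be a prime power and let R = ℚ. In the free ℚ-algebra generated by symbols x_k for k ∈ ℤ subject to the relations x_{k+1}·x_k - q^{-1}·x_k·x_{k+1} = q - 1 for all k, and x_{k+m}·x_k = q^{(-1)^m}·x_k·x_{k+m} for all k ∈ ℤ and m ≥ 2, the monomials x_{k_1}·x_{k_2}···x_{k_r} with k_1 ≥ k_2 ≥ ... ≥ k_r form a spanning set. -/

import Mathlib

open FreeAlgebra

/-- The defining relations of the Hall algebra of `Perf(F_q)`:
`x_{k+1}·x_k - q⁻¹·x_k·x_{k+1} = q - 1` and `x_{k+m}·x_k = q^{(-1)^m}·x_k·x_{k+m}`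
for `m ≥ 2`. -/
inductive HallRel (q : ℚ) : FreeAlgebra ℚ ℤ → FreeAlgebra ℚ ℤ → Prop
  | hecke (k : ℤ) :
      HallRel q (ι ℚ (k + 1) * ι ℚ k - q⁻¹ • (ι ℚ k * ι ℚ (k + 1)))
        (algebraMap ℚ (FreeAlgebra ℚ ℤ) (q - 1))
  | comm (k : ℤ) (m : ℕ) (hm : 2 ≤ m) :
      HallRel q (ι ℚ (k + (m : ℤ)) * ι ℚ k)
        ((q ^ ((-1 : ℤ) ^ m)) • (ι ℚ k * ι ℚ (k + (m : ℤ))))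

/-
If generators `x_i` of an algebra, indexed by a linear order, satisfy `x_i x_j = c x_j x_i + d`
whenever `i < j`, then left multiplication by any `x_k` preserves the span of the weakly
decreasing monomials: sort `x_k` into place by such swaps, each of which produces a monomial of
the same shape plus a monomial of smaller length. As the generators generate, the span is
everything. In the Hall algebra both relations have this form, the Hecke relation because
`q ≠ 0` makes `q⁻¹` invertible.
-/

lemma le_head_of_isChain_ge {α : Type*} [Preorder α] {a c : α} {t : List α}
    (hl : (a :: t).IsChain (· ≥ ·)) (hc : c ∈ a :: t) : c ≤ a := by
  rcases List.mem_cons.mp hc with rfl | hc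
  · exact le_rfl
  · exact (List.pairwise_cons.mp (List.isChain_iff_pairwise.mp hl)).1 c hc

section OrderedMonomials

variable {R A ι : Type*} [CommSemiring R] [Semiring A] [Algebra R A] [LinearOrder ι] (x : ι → A)

def orderedMonomials : Set A :=
  {m | ∃ l : List ι, l.IsChain (· ≥ ·) ∧ m = (l.map x).prod}

def orderedMonomialsLE (b : ι) : Set A :=
  {m | ∃ l : List ι, l.IsChain (· ≥ ·) ∧ (∀ a ∈ l, a ≤ b) ∧ m = (l.map x).prod}

variable {x}

lemma orderedMonomialsLE_subset (b : ι) : orderedMonomialsLE x b ⊆ orderedMonomials x := by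
  rintro m ⟨l, hl, -, rfl⟩
  exact ⟨l, hl, rfl⟩

lemma mul_mem_span_orderedMonomialsLE {a b : ι} (hab : a ≤ b) {y : A}
    (hy : y ∈ Submodule.span R (orderedMonomialsLE x a)) :
    x a * y ∈ Submodule.span R (orderedMonomialsLE x b) := by
  refine Submodule.span_induction (fun m hm ↦ ?_) (by simp)
    (fun _ _ _ _ h₁ h₂ ↦ by rw [mul_add]; exact add_mem h₁ h₂)
    (fun c _ _ h ↦ by rw [mul_smul_comm]; exact Submodule.smul_mem _ c h) hy
  obtain ⟨l, hl, hla, rfl⟩ := hm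
  refine Submodule.subset_span ⟨a :: l, List.isChain_cons.mpr ⟨?_, hl⟩, ?_, by simp⟩
  · exact fun c hc ↦ hla c (List.mem_of_mem_head? hc)
  · simpa using ⟨hab, fun c hc ↦ (hla c hc).trans hab⟩

variable (hswap : ∀ ⦃i j : ι⦄, i < j → ∃ c d : R, x i * x j = c • (x j * x i) + algebraMap R A d)
include hswap

lemma gen_mul_prod_mem_span_orderedMonomialsLE (l : List ι) (hl : l.IsChain (· ≥ ·)) {b k : ι}
    (hlb : ∀ a ∈ l, a ≤ b) (hkb : k ≤ b) :
    x k * (l.map x).prod ∈ Submodule.span R (orderedMonomialsLE x b) := by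
  induction l generalizing b with
  | nil => exact Submodule.subset_span ⟨[k], .singleton k, by simpa using hkb, by simp⟩
  | cons a t ih =>
    by_cases hak : a ≤ k
    · refine Submodule.subset_span ⟨k :: a :: t, List.isChain_cons_cons.mpr ⟨hak, hl⟩, ?_, ?_⟩
      · exact List.forall_mem_cons.mpr ⟨hkb, hlb⟩
      · simp
    obtain ⟨c, d, hcd⟩ := hswap (lt_of_not_ge hak)
    have hta : ∀ c ∈ t, c ≤ a := fun c hc ↦ le_head_of_isChain_ge hl (List.mem_cons_of_mem a hc)
    have hab : a ≤ b := hlb a List.mem_cons_self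
    have hsorted : x a * (x k * (t.map x).prod) ∈ Submodule.span R (orderedMonomialsLE x b) :=
      mul_mem_span_orderedMonomialsLE hab (ih hl.tail hta (le_of_not_ge hak))
    have hshorter : (t.map x).prod ∈ Submodule.span R (orderedMonomialsLE x b) :=
      Submodule.subset_span ⟨t, hl.tail, fun c hc ↦ (hta c hc).trans hab, rfl⟩
    have hexpand : x k * ((a :: t).map x).prod =
        c • (x a * (x k * (t.map x).prod)) + d • (t.map x).prod := by
      simp only [List.map_cons, List.prod_cons, ← mul_assoc, hcd, add_mul, smul_mul_assoc,
        Algebra.algebraMap_eq_smul_one, one_mul]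
    rw [hexpand]
    exact add_mem (Submodule.smul_mem _ c hsorted) (Submodule.smul_mem _ d hshorter)

lemma gen_mul_mem_span_orderedMonomials (k : ι) {y : A}
    (hy : y ∈ Submodule.span R (orderedMonomials x)) :
    x k * y ∈ Submodule.span R (orderedMonomials x) := by
  refine Submodule.span_induction (fun m hm ↦ ?_) (by simp)
    (fun _ _ _ _ h₁ h₂ ↦ by rw [mul_add]; exact add_mem h₁ h₂)
    (fun c _ _ h ↦ by rw [mul_smul_comm]; exact Submodule.smul_mem _ c h) hy
  obtain ⟨l, hl, rfl⟩ := hm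
  have hbound : ∃ b, k ≤ b ∧ ∀ a ∈ l, a ≤ b := by
    cases l with
    | nil => exact ⟨k, le_rfl, by simp⟩
    | cons a t =>
      exact ⟨max k a, le_max_left k a,
        fun c hc ↦ le_max_of_le_right (le_head_of_isChain_ge hl hc)⟩
  obtain ⟨b, hkb, hlb⟩ := hbound
  exact Submodule.span_mono (orderedMonomialsLE_subset b)
    (gen_mul_prod_mem_span_orderedMonomialsLE hswap l hl hlb hkb)

theorem span_orderedMonomials_eq_top (hgen : Algebra.adjoin R (Set.range x) = ⊤) :
    Submodule.span R (orderedMonomials x) = ⊤ := by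
  have hone : (1 : A) ∈ Submodule.span R (orderedMonomials x) :=
    Submodule.subset_span ⟨[], .nil, by simp⟩
  suffices hmul : ∀ z ∈ Algebra.adjoin R (Set.range x),
      ∀ y ∈ Submodule.span R (orderedMonomials x), z * y ∈ Submodule.span R (orderedMonomials x) by
    refine eq_top_iff.mpr fun z _ ↦ ?_
    simpa using hmul z (hgen ▸ Algebra.mem_top) 1 hone
  intro z hz
  induction hz using Algebra.adjoin_induction with
  | mem z hz =>
    obtain ⟨k, rfl⟩ := hz
    exact fun y hy ↦ gen_mul_mem_span_orderedMonomials hswap k hy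
  | algebraMap r =>
    exact fun y hy ↦ by
      rw [Algebra.algebraMap_eq_smul_one, smul_one_mul]; exact Submodule.smul_mem _ r hy
  | add z w _ _ hz hw => exact fun y hy ↦ by rw [add_mul]; exact add_mem (hz y hy) (hw y hy)
  | mul z w _ _ hz hw => exact fun y hy ↦ by rw [mul_assoc]; exact hz _ (hw y hy)

end OrderedMonomials

section HallAlgebra

noncomputable def hallGen (q : ℚ) (k : ℤ) : RingQuot (HallRel q) :=
  RingQuot.mkAlgHom ℚ (HallRel q) (ι ℚ k)

lemma adjoin_range_hallGen (q : ℚ) : Algebra.adjoin ℚ (Set.range (hallGen q)) = ⊤ := by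
  rw [show hallGen q = RingQuot.mkAlgHom ℚ (HallRel q) ∘ ι ℚ from rfl, Set.range_comp,
    Algebra.adjoin_image, FreeAlgebra.adjoin_range_ι, Algebra.map_top, AlgHom.range_eq_top]
  exact RingQuot.mkAlgHom_surjective ℚ (HallRel q)

lemma hallGen_mul_succ {q : ℚ} (hq : q ≠ 0) (k : ℤ) :
    hallGen q k * hallGen q (k + 1) =
      q • (hallGen q (k + 1) * hallGen q k) + algebraMap ℚ _ (q - q ^ 2) := by
  have hrel := RingQuot.mkAlgHom_rel ℚ (HallRel.hecke (q := q) k)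
  rw [map_sub, map_mul, map_smul, map_mul, AlgHom.commutes] at hrel
  change hallGen q (k + 1) * hallGen q k - q⁻¹ • (hallGen q k * hallGen q (k + 1)) =
    algebraMap ℚ _ (q - 1) at hrel
  have hsolved : q⁻¹ • (hallGen q k * hallGen q (k + 1)) =
      hallGen q (k + 1) * hallGen q k - algebraMap ℚ _ (q - 1) := by
    rw [← hrel]; abel
  calc hallGen q k * hallGen q (k + 1)
      = q • (q⁻¹ • (hallGen q k * hallGen q (k + 1))) := (smul_inv_smul₀ hq _).symm
    _ = q • (hallGen q (k + 1) * hallGen q k) - algebraMap ℚ _ (q * (q - 1)) := by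
      rw [hsolved, smul_sub, Algebra.smul_def q (algebraMap ℚ _ _), ← map_mul]
    _ = _ := by rw [sub_eq_add_neg, ← map_neg]; ring_nf

lemma hallGen_swap {q : ℚ} (hq : q ≠ 0) ⦃i j : ℤ⦄ (hij : i < j) :
    ∃ c d : ℚ, hallGen q i * hallGen q j = c • (hallGen q j * hallGen q i) + algebraMap ℚ _ d := by
  obtain ⟨m, rfl⟩ := Int.exists_add_of_le hij.le
  rcases (show m = 1 ∨ 2 ≤ m by omega) with rfl | hm
  · exact ⟨q, q - q ^ 2, hallGen_mul_succ hq i⟩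
  · refine ⟨(q ^ ((-1 : ℤ) ^ m))⁻¹, 0, ?_⟩
    have hrel := RingQuot.mkAlgHom_rel ℚ (HallRel.comm (q := q) i m hm)
    simp only [map_mul, map_smul] at hrel
    change hallGen q (i + m) * hallGen q i = _ • (hallGen q i * hallGen q (i + m)) at hrel
    rw [hrel, smul_smul, inv_mul_cancel₀ (zpow_ne_zero _ hq), one_smul, map_zero, add_zero]

end HallAlgebra

/-- The ordered monomials `x_{k_1}⋯x_{k_r}` with `k_1 ≥ … ≥ k_r` span the Hall
algebra of `Perf(F_q)` over `ℚ`. -/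
theorem stmt15 (q : ℚ) (hq : ∃ p n : ℕ, Nat.Prime p ∧ 0 < n ∧ q = (p : ℚ) ^ n) :
    Submodule.span ℚ
        {x : RingQuot (HallRel q) |
          ∃ ls : List ℤ, ls.Chain' (· ≥ ·) ∧
            x = (ls.map fun k => RingQuot.mkAlgHom ℚ (HallRel q) (ι ℚ k)).prod} = ⊤ := by
  obtain ⟨p, n, hp, -, rfl⟩ := hq
  have hq0 : (p : ℚ) ^ n ≠ 0 := pow_ne_zero n (Nat.cast_ne_zero.mpr hp.ne_zero)
  exact span_orderedMonomials_eq_top (hallGen_swap hq0) (adjoin_range_hallGen _)
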